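/- arXiv:2510.26842 — 8 statements merged into one kernel-verified Lean document; each statement's English description precedes it below -/
import Mathlib

section
/- For all integers s ≥ 1, n ≥ k ≥ 0, the Lah number with higher level satisfies the explicit formula L_s(n,k) = Σ_{1 ≤ j_1 < j_2 < ... < j_{n-k} ≤ n} (2j_1 − 2)^s · (2j_2 − 3)^s · ... · (2j_{n-k} − (n−k+1))^s, i.e., the sum over all strictly increasing sequences 1 ≤ j_1 < ... < j_{n-k} ≤ n of the product ∏_{t=1}^{n-k} (2j_t − (t+1))^s. -/
open Finset Polynomial

/-- Lah numbers with higher level: `lahH s n k` satisfies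
`lahH s 0 0 = 1`, `lahH s n 0 = lahH s 0 k = 0` for `n, k > 0`, and
`lahH s n k = lahH s (n-1) (k-1) + (n+k-1)^s * lahH s (n-1) k` for `n, k ≥ 1`. -/
def lahH (s : ℕ) : ℕ → ℕ → ℕ
  | 0, 0 => 1
  | 0, _ + 1 => 0
  | _ + 1, 0 => 0
  | n + 1, k + 1 => lahH s n k + (n + k + 1) ^ s * lahH s n (k + 1)

/-- Stirling numbers of the first kind with higher level. -/
def stirling1H (s : ℕ) : ℕ → ℕ → ℕ
  | 0, 0 => 1
  | 0, _ + 1 => 0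
  | _ + 1, 0 => 0
  | n + 1, k + 1 => stirling1H s n k + n ^ s * stirling1H s n (k + 1)

/-- Stirling numbers of the second kind with higher level. -/
def stirling2H (s : ℕ) : ℕ → ℕ → ℕ
  | 0, 0 => 1
  | 0, _ + 1 => 0
  | _ + 1, 0 => 0
  | n + 1, k + 1 => stirling2H s n k + (k + 1) ^ s * stirling2H s n (k + 1)

/-- Ordinary Stirling numbers of the second kind. -/
def stirling2 : ℕ → ℕ → ℕ
  | 0, 0 => 1
  | 0, _ + 1 => 0
  | _ + 1, 0 => 0
  | n + 1, k + 1 => stirling2 n k + (k + 1) * stirling2 n (k + 1)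

/-- Lah numbers of order `s`: `lahOrd s n k = ∑_{j=k}^{n} c_s(n,j) * S_s(j,k)`. -/
def lahOrd (s n k : ℕ) : ℕ := ∑ j ∈ Finset.Icc k n, stirling1H s n j * stirling2H s j k

/-- Lah polynomial with higher level `L_n^s(x) = ∑_{k=0}^{n} L_s(n,k) x^k`. -/
noncomputable def lahHPoly (s n : ℕ) : Polynomial ℤ :=
  ∑ k ∈ Finset.range (n + 1), Polynomial.C (lahH s n k : ℤ) * Polynomial.X ^ k

/-- Lah polynomial of order `s`: `ℒ_n^s(x) = ∑_{k=0}^{n} T_s(n,k) x^k`. -/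
noncomputable def lahOrdPoly (s n : ℕ) : Polynomial ℤ :=
  ∑ k ∈ Finset.range (n + 1), Polynomial.C (lahOrd s n k : ℤ) * Polynomial.X ^ k

lemma lahH_eq_zero (s n k : ℕ) (h : n < k) : lahH s n k = 0 := by
  induction n generalizing k with
  | zero =>
    cases k with
    | zero => omega
    | succ k => rfl
  | succ n ih =>
    cases k with
    | zero => omega
    | succ k =>
      rw [lahH, ih k (by omega), ih (k + 1) (by omega)]
      simp

lemma lahH_self (s n : ℕ) : lahH s n n = 1 := by
  induction n with
  | zero => rfl
  | succ n ih => rw [lahH, ih, lahH_eq_zero s n (n + 1) (by omega)]; ring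

/-- Explicit formula: the Lah number with higher level is the sum over all
strictly increasing sequences `1 ≤ j₁ < ⋯ < j_{n-k} ≤ n` (i.e. subsets `A` of
`{1,…,n}` of size `n-k`) of the product `∏_t (2 jₜ - (t+1))^s`, where the rank
`t` of `j ∈ A` is the number of elements of `A` that are `≤ j`. -/
theorem lahH_explicit (s n k : ℕ) (hs : 1 ≤ s) (hk : k ≤ n) :
    lahH s n k =
      ∑ A ∈ (Finset.Icc 1 n).powersetCard (n - k),
        ∏ j ∈ A, (2 * j - ((A.filter (fun x => x ≤ j)).card + 1)) ^ s := by
  induction n generalizing k with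
  | zero =>
    interval_cases k
    simp [lahH]
  | succ n ih =>
    cases k with
    | zero =>
      rw [show (n + 1) - 0 = (Finset.Icc 1 (n + 1)).card by simp,
        Finset.powersetCard_self, Finset.sum_singleton,
        show lahH s (n + 1) 0 = 0 from rfl]
      symm
      apply Finset.prod_eq_zero (i := 1) (by simp)
      have h1 : (Finset.Icc 1 (n + 1)).filter (fun x => x ≤ 1) = {1} := by
        ext x; simp; omega
      rw [h1]
      simp [zero_pow (by omega : s ≠ 0)]
    | succ k =>
      by_cases hkn : k = n
      · subst hkn
        simp [lahH_self]
      · have hk' : k < n := by omega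
        have hIcc : Finset.Icc 1 (n + 1) = insert (n + 1) (Finset.Icc 1 n) := by
          ext x; simp; omega
        have hnotmem : (n + 1) ∉ Finset.Icc 1 n := by simp
        have hm : (n + 1) - (k + 1) = (n - (k + 1)) + 1 := by omega
        have hdisj : Disjoint ((Finset.Icc 1 n).powersetCard (n - (k + 1) + 1))
            (((Finset.Icc 1 n).powersetCard (n - (k + 1))).image (insert (n + 1))) := by
          rw [Finset.disjoint_left]
          intro A hA hA'
          rw [Finset.mem_powersetCard] at hA
          rw [Finset.mem_image] at hA'
          obtain ⟨B, _, hB⟩ := hA'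
          have : n + 1 ∈ A := by rw [← hB]; exact Finset.mem_insert_self _ _
          exact hnotmem (hA.1 this)
        rw [hIcc, hm, Finset.powersetCard_succ_insert hnotmem, Finset.sum_union hdisj]
        have hinj : ∀ A ∈ (Finset.Icc 1 n).powersetCard (n - (k + 1)),
            ∀ B ∈ (Finset.Icc 1 n).powersetCard (n - (k + 1)),
            insert (n + 1) A = insert (n + 1) B → A = B := by
          intro A hA B hB h
          rw [Finset.mem_powersetCard] at hA hB
          have hA1 : (n + 1) ∉ A := fun hx => hnotmem (hA.1 hx)
          have hB1 : (n + 1) ∉ B := fun hx => hnotmem (hB.1 hx)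
          rw [← Finset.erase_insert hA1, ← Finset.erase_insert hB1, h]
        rw [Finset.sum_image hinj]
        have hfirst : ∑ A ∈ (Finset.Icc 1 n).powersetCard (n - (k + 1) + 1),
            ∏ j ∈ A, (2 * j - ((A.filter (fun x => x ≤ j)).card + 1)) ^ s
            = lahH s n k := by
          rw [ih k (le_of_lt hk'), show n - (k + 1) + 1 = n - k by omega]
        have hsecond : ∀ A ∈ (Finset.Icc 1 n).powersetCard (n - (k + 1)),
            ∏ j ∈ insert (n + 1) A,
              (2 * j - (((insert (n + 1) A).filter (fun x => x ≤ j)).card + 1)) ^ s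
            = (n + k + 1) ^ s *
              ∏ j ∈ A, (2 * j - ((A.filter (fun x => x ≤ j)).card + 1)) ^ s := by
          intro A hA
          rw [Finset.mem_powersetCard] at hA
          have hA1 : (n + 1) ∉ A := fun hx => hnotmem (hA.1 hx)
          rw [Finset.prod_insert hA1]
          congr 1
          · have hfull : (insert (n + 1) A).filter (fun x => x ≤ n + 1)
                = insert (n + 1) A := by
              apply Finset.filter_true_of_mem
              intro x hx
              rcases Finset.mem_insert.mp hx with h | h
              · omega
              · have := hA.1 h; simp [Finset.mem_Icc] at this; omega
            rw [hfull, Finset.card_insert_of_notMem hA1, hA.2]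
            congr 1
            omega
          · apply Finset.prod_congr rfl
            intro j hj
            have hjn : j ≤ n := by
              have := hA.1 hj; simp [Finset.mem_Icc] at this; omega
            rw [Finset.filter_insert]
            rw [if_neg (by omega)]
        rw [Finset.sum_congr rfl hsecond, hfirst, ← Finset.mul_sum,
          ← ih (k + 1) hk', lahH]
end

section
/- For all integers n ≥ 1 and s ≥ 1, the Lah polynomials with higher level satisfy the recurrence L_{n+1}^s(x) = x·L_n^s(x) + Σ_{j=0}^{s} C(s,j) · n^{s−j} · Σ_{i=0}^{j} S(j,i) · x^i · (d^i/dx^i) L_n^s(x), where C(s,j) is a binomial coefficient, S(j,i) are the Stirling numbers of the second kind, and d^i/dx^i denotes the i-th iterated formal derivative of polynomials. -/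
open Finset Polynomial

lemma lahH_zero (s : ℕ) : ∀ n k : ℕ, n < k → lahH s n k = 0 := by
  intro n
  induction n with
  | zero => intro k hk; obtain ⟨m, rfl⟩ := Nat.exists_eq_add_of_lt hk; rfl
  | succ n ih =>
      intro k hk
      obtain ⟨m, rfl⟩ := Nat.exists_eq_succ_of_ne_zero (by omega : k ≠ 0)
      show lahH s n m + (n + m + 1) ^ s * lahH s n (m + 1) = 0
      rw [ih m (by omega), ih (m+1) (by omega)]; ring

lemma stirling2_zero : ∀ j i : ℕ, j < i → stirling2 j i = 0 := by
  intro j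
  induction j with
  | zero => intro i hi; obtain ⟨m, rfl⟩ := Nat.exists_eq_add_of_lt hi; rfl
  | succ j ih =>
      intro i hi
      obtain ⟨m, rfl⟩ := Nat.exists_eq_succ_of_ne_zero (by omega : i ≠ 0)
      show stirling2 j m + (m + 1) * stirling2 j (m + 1) = 0
      rw [ih m (by omega), ih (m+1) (by omega)]; ring

lemma desc_id (k i : ℕ) : k.descFactorial (i+1) + i * k.descFactorial i = k * k.descFactorial i := by
  rcases le_or_gt i k with h | h
  · rw [Nat.descFactorial_succ, ← Nat.add_mul]
    congr 1; omega
  · rw [Nat.descFactorial_of_lt h, Nat.descFactorial_of_lt (by omega)]; ring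

lemma stirling_desc (j k : ℕ) :
    ∑ i ∈ Finset.range (j+1), stirling2 j i * k.descFactorial i = k ^ j := by
  induction j with
  | zero => simp [stirling2]
  | succ j ih =>
      rw [Finset.sum_range_succ']
      have h0 : stirling2 (j+1) 0 = 0 := rfl
      rw [h0]
      have hexp : ∀ i, stirling2 (j+1) (i+1) = stirling2 j i + (i+1) * stirling2 j (i+1) := fun i => rfl
      have hsplit : ∑ i ∈ Finset.range (j+1), stirling2 (j+1) (i+1) * k.descFactorial (i+1)
          = ∑ i ∈ Finset.range (j+1), stirling2 j i * k.descFactorial (i+1)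
            + ∑ i ∈ Finset.range (j+1), (i+1) * stirling2 j (i+1) * k.descFactorial (i+1) := by
        rw [← Finset.sum_add_distrib]
        exact Finset.sum_congr rfl fun i _ => by rw [hexp]; ring
      rw [hsplit]
      -- second sum: ∑ i in range (j+1), (i+1) * stirling2 j (i+1) * desc k (i+1)
      -- = ∑ i in range (j+1), i * stirling2 j i * desc k i  (shift, boundary terms vanish)
      have hshift : ∑ i ∈ Finset.range (j+1), (i+1) * stirling2 j (i+1) * k.descFactorial (i+1)
          = ∑ i ∈ Finset.range (j+1), i * (stirling2 j i * k.descFactorial i) := by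
        rw [Finset.sum_range_succ' (fun i => i * (stirling2 j i * k.descFactorial i))]
        rw [Finset.sum_range_succ]
        simp [stirling2_zero j (j+1) (by omega), mul_assoc]
      rw [hshift, ← Finset.sum_add_distrib]
      have : ∀ i ∈ Finset.range (j+1),
          stirling2 j i * k.descFactorial (i+1) + i * (stirling2 j i * k.descFactorial i)
          = k * (stirling2 j i * k.descFactorial i) := by
        intro i _
        calc stirling2 j i * k.descFactorial (i+1) + i * (stirling2 j i * k.descFactorial i)
            = stirling2 j i * (k.descFactorial (i+1) + i * k.descFactorial i) := by ring
          _ = k * (stirling2 j i * k.descFactorial i) := by rw [desc_id]; ring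
      rw [Finset.sum_congr rfl this, ← Finset.mul_sum, ih, pow_succ]; ring

lemma binom_sum (s n k : ℕ) :
    ∑ j ∈ Finset.range (s+1), s.choose j * n^(s-j) * k^j = (n+k)^s := by
  rw [add_comm n k, add_pow]
  exact Finset.sum_congr rfl fun j _ => by simp only [Nat.cast_id]; ring

lemma iterDeriv_sum {ι : Type*} (t : Finset ι) (f : ι → Polynomial ℤ) (i : ℕ) :
    Polynomial.derivative^[i] (∑ k ∈ t, f k) = ∑ k ∈ t, Polynomial.derivative^[i] (f k) := by
  induction i with
  | zero => simp
  | succ i ih => simp [Function.iterate_succ_apply', ih]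

lemma xiDi (i k : ℕ) :
    (Polynomial.X : Polynomial ℤ)^i * Polynomial.derivative^[i] (Polynomial.X ^ k : Polynomial ℤ)
      = Polynomial.C (k.descFactorial i : ℤ) * Polynomial.X ^ k := by
  rw [Polynomial.iterate_derivative_X_pow_eq_C_mul]
  rcases le_or_gt i k with h | h
  · obtain ⟨d, rfl⟩ := Nat.exists_eq_add_of_le h
    rw [Nat.add_sub_cancel_left, pow_add]; ring
  · rw [Nat.descFactorial_of_lt h]; simp

theorem lahHPoly_rec (n s : ℕ) (hn : 1 ≤ n) (hs : 1 ≤ s) :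
    lahHPoly s (n + 1) =
      Polynomial.X * lahHPoly s n +
        ∑ j ∈ Finset.range (s + 1),
          Polynomial.C ((s.choose j : ℤ) * (n : ℤ) ^ (s - j)) *
            ∑ i ∈ Finset.range (j + 1),
              Polynomial.C (stirling2 j i : ℤ) * Polynomial.X ^ i *
                (Polynomial.derivative^[i] (lahHPoly s n)) := by
  obtain ⟨m, rfl⟩ : ∃ m, n = m + 1 := ⟨n - 1, by omega⟩
  set N := m + 1 with hN
  -- Step 1: rewrite the double sum on the RHS
  have h1 : ∀ j i : ℕ, Polynomial.C (stirling2 j i : ℤ) * Polynomial.X ^ i *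
        (Polynomial.derivative^[i] (lahHPoly s N))
      = ∑ k ∈ Finset.range (N+1),
          Polynomial.C ((stirling2 j i * (Nat.descFactorial k i * lahH s N k) : ℕ) : ℤ) *
            Polynomial.X ^ k := by
    intro j i
    rw [lahHPoly, iterDeriv_sum, Finset.mul_sum]
    refine Finset.sum_congr rfl fun k _ => ?_
    rw [Polynomial.iterate_derivative_C_mul]
    have h2 := xiDi i k
    calc Polynomial.C (stirling2 j i : ℤ) * Polynomial.X ^ i *
          (Polynomial.C (lahH s N k : ℤ) * Polynomial.derivative^[i] (Polynomial.X ^ k))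
        = Polynomial.C (stirling2 j i : ℤ) * Polynomial.C (lahH s N k : ℤ) *
            (Polynomial.X ^ i * Polynomial.derivative^[i] (Polynomial.X ^ k)) := by ring
      _ = Polynomial.C (stirling2 j i : ℤ) * Polynomial.C (lahH s N k : ℤ) *
            (Polynomial.C (Nat.descFactorial k i : ℤ) * Polynomial.X ^ k) := by rw [h2]
      _ = _ := by push_cast [Polynomial.C_mul]; ring
  have key : ∀ j ∈ Finset.range (s+1),
      Polynomial.C ((s.choose j : ℤ) * (N : ℤ) ^ (s - j)) *
        ∑ i ∈ Finset.range (j + 1),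
          Polynomial.C (stirling2 j i : ℤ) * Polynomial.X ^ i *
            (Polynomial.derivative^[i] (lahHPoly s N))
      = ∑ k ∈ Finset.range (N+1),
          Polynomial.C ((s.choose j * N^(s-j) * (k^j * lahH s N k) : ℕ) : ℤ) *
            Polynomial.X ^ k := by
    intro j _
    simp only [h1, Finset.mul_sum]
    rw [Finset.sum_comm]
    refine Finset.sum_congr rfl fun k _ => ?_
    have hnat : ∑ i ∈ Finset.range (j+1),
        stirling2 j i * (Nat.descFactorial k i * lahH s N k) = k^j * lahH s N k := by
      calc ∑ i ∈ Finset.range (j+1), stirling2 j i * (Nat.descFactorial k i * lahH s N k)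
          = (∑ i ∈ Finset.range (j+1), stirling2 j i * Nat.descFactorial k i) * lahH s N k := by
            rw [Finset.sum_mul]; exact Finset.sum_congr rfl fun i _ => by ring
        _ = k^j * lahH s N k := by rw [stirling_desc]
    rw [← Finset.mul_sum, ← Finset.sum_mul, ← map_sum, ← Nat.cast_sum, hnat]
    push_cast [Polynomial.C_mul, Polynomial.C_pow]; ring
  have key2 : ∀ k ∈ Finset.range (N+1),
      (∑ j ∈ Finset.range (s+1),
        Polynomial.C ((s.choose j * N^(s-j) * (k^j * lahH s N k) : ℕ) : ℤ) * Polynomial.X ^ k)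
      = Polynomial.C (((N+k)^s * lahH s N k : ℕ) : ℤ) * Polynomial.X ^ k := by
    intro k _
    have hnat2 : ∑ j ∈ Finset.range (s+1), s.choose j * N^(s-j) * (k^j * lahH s N k)
        = (N+k)^s * lahH s N k := by
      calc ∑ j ∈ Finset.range (s+1), s.choose j * N^(s-j) * (k^j * lahH s N k)
          = (∑ j ∈ Finset.range (s+1), s.choose j * N^(s-j) * k^j) * lahH s N k := by
            rw [Finset.sum_mul]; exact Finset.sum_congr rfl fun j _ => by ring
        _ = (N+k)^s * lahH s N k := by rw [binom_sum]
    rw [← Finset.sum_mul, ← map_sum, ← Nat.cast_sum, hnat2]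
  -- Step 3: the recurrence for the Lah polynomial
  have e0 : lahH s (N + 1) 0 = 0 := rfl
  have erec : ∀ k, lahH s (N+1) (k+1) = lahH s N k + (N+k+1)^s * lahH s N (k+1) := fun k => rfl
  have ea0 : lahH s N 0 = 0 := rfl
  have eatop : lahH s N (N + 1) = 0 := lahH_zero s N (N+1) (by omega)
  have claim1 : lahHPoly s (N + 1) = Polynomial.X * lahHPoly s N +
      ∑ k ∈ Finset.range (N+1),
        Polynomial.C (((N+k)^s * lahH s N k : ℕ) : ℤ) * Polynomial.X ^ k := by
    rw [lahHPoly, Finset.sum_range_succ', e0]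
    have hsplit : ∀ k ∈ Finset.range (N+1),
        (Polynomial.C ((lahH s (N+1) (k+1) : ℕ) : ℤ)) * Polynomial.X^(k+1)
        = Polynomial.C ((lahH s N k : ℕ):ℤ) * Polynomial.X^(k+1)
          + Polynomial.C ((((N+k+1)^s * lahH s N (k+1) : ℕ)):ℤ) * Polynomial.X^(k+1) := by
      intro k _; rw [erec]
      simp only [Nat.cast_add, Nat.cast_mul, Nat.cast_pow, Polynomial.C_add, Polynomial.C_mul,
        Polynomial.C_pow]
      ring
    rw [Finset.sum_congr rfl hsplit, Finset.sum_add_distrib]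
    simp only [Nat.cast_zero, Polynomial.C_0, zero_mul, add_zero]
    congr 1
    · rw [lahHPoly, Finset.mul_sum]
      exact Finset.sum_congr rfl fun k _ => by rw [pow_succ]; ring
    · rw [Finset.sum_range_succ'
        (fun k => Polynomial.C (((N+k)^s * lahH s N k : ℕ) : ℤ) * Polynomial.X ^ k),
        Finset.sum_range_succ]
      simp only [eatop, ea0, mul_zero, Nat.cast_zero, Polynomial.C_0, zero_mul, add_zero]
      exact Finset.sum_congr rfl fun k _ => rfl
  rw [Finset.sum_congr rfl key, Finset.sum_comm, Finset.sum_congr rfl key2]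
  exact claim1
end

section
/- For all integers n ≥ 1 and s ≥ 1, the polynomials Q_n^s(x) = x^n · L_n^s(x) satisfy the recurrence Q_{n+1}^s(x) = x^2 · Q_n^s(x) + Σ_{i=1}^{s} S(s,i) · x^{i+1} · (d^i/dx^i) Q_n^s(x), where S(s,i) are the Stirling numbers of the second kind and d^i/dx^i denotes the i-th iterated formal derivative of polynomials. -/
open Finset Polynomial

/-- `Q_n^s(x) = x^n L_n^s(x)`. -/
noncomputable def Qpoly (s n : ℕ) : Polynomial ℤ := Polynomial.X ^ n * lahHPoly s n



noncomputable def theta (p : Polynomial ℤ) : Polynomial ℤ := Polynomial.X * Polynomial.derivative p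

lemma theta_add (p q : Polynomial ℤ) : theta (p + q) = theta p + theta q := by
  simp [theta, mul_add]

lemma theta_sum {ι : Type*} (t : Finset ι) (f : ι → Polynomial ℤ) :
    theta (∑ i ∈ t, f i) = ∑ i ∈ t, theta (f i) := by
  simp [theta, derivative_sum, Finset.mul_sum]

lemma theta_C_mul (a : ℤ) (q : Polynomial ℤ) : theta (C a * q) = C a * theta q := by
  simp [theta]; ring

lemma theta_monomial (a : ℤ) (m : ℕ) : theta (C a * X ^ m) = C ((m : ℤ) * a) * X ^ m := by
  cases m with
  | zero => simp [theta]
  | succ m => simp [theta, derivative_X_pow]; ring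

lemma theta_iter_monomial (s : ℕ) (m : ℕ) : ∀ a : ℤ,
    theta^[s] (C a * X ^ m) = C ((m : ℤ) ^ s * a) * X ^ m := by
  induction s with
  | zero => intro a; simp
  | succ s ih =>
    intro a
    rw [Function.iterate_succ_apply, theta_monomial, ih ((m : ℤ) * a)]
    ring_nf

lemma stirling2_succ_zero (s : ℕ) : stirling2 (s + 1) 0 = 0 := rfl

lemma stirling2_of_lt : ∀ s k : ℕ, s < k → stirling2 s k = 0 := by
  intro s
  induction s with
  | zero => intro k hk; cases k with
    | zero => omega
    | succ k => rfl
  | succ s ih =>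
    intro k hk
    cases k with
    | zero => omega
    | succ k =>
      show stirling2 s k + (k + 1) * stirling2 s (k + 1) = 0
      rw [ih k (by omega), ih (k + 1) (by omega)]
      ring

lemma theta_X_pow_mul (i : ℕ) (q : Polynomial ℤ) :
    theta (X ^ i * q) = C (i : ℤ) * (X ^ i * q) + X ^ (i + 1) * derivative q := by
  cases i with
  | zero => simp [theta]
  | succ i =>
    simp only [theta, derivative_mul, derivative_X_pow]
    push_cast
    rw [pow_succ]
    ring

lemma theta_iter_eq (s : ℕ) (p : Polynomial ℤ) :
    theta^[s] p = ∑ i ∈ Finset.range (s + 1),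
      C (stirling2 s i : ℤ) * X ^ i * derivative^[i] p := by
  induction s with
  | zero => simp [stirling2]
  | succ s ih =>
    rw [Function.iterate_succ_apply', ih, theta_sum]
    have hterm : ∀ i ∈ Finset.range (s + 1),
        theta (C (stirling2 s i : ℤ) * X ^ i * derivative^[i] p) =
          C ((i : ℤ) * (stirling2 s i : ℤ)) * X ^ i * derivative^[i] p +
            C (stirling2 s i : ℤ) * X ^ (i + 1) * derivative^[i + 1] p := by
      intro i _
      rw [mul_assoc, theta_C_mul, theta_X_pow_mul, ← Function.iterate_succ_apply' derivative]
      simp only [map_mul]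
      ring
    rw [Finset.sum_congr rfl hterm, Finset.sum_add_distrib]
    rw [Finset.sum_range_succ' (fun i => C (stirling2 (s+1) i : ℤ) * X ^ i * derivative^[i] p)]
    simp only [stirling2_succ_zero, Nat.cast_zero, map_zero, zero_mul, add_zero]
    have hrec : ∀ i : ℕ, (stirling2 (s + 1) (i + 1) : ℤ) =
        (stirling2 s i : ℤ) + ((i : ℤ) + 1) * (stirling2 s (i + 1) : ℤ) := by
      intro i
      show ((stirling2 s i + (i + 1) * stirling2 s (i + 1) : ℕ) : ℤ) = _
      push_cast; ring
    have hsplit : ∀ i ∈ Finset.range (s + 1),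
        C (stirling2 (s + 1) (i + 1) : ℤ) * X ^ (i + 1) * derivative^[i + 1] p =
          C (stirling2 s i : ℤ) * X ^ (i + 1) * derivative^[i + 1] p +
            C (((i : ℤ) + 1) * (stirling2 s (i + 1) : ℤ)) * X ^ (i + 1) * derivative^[i + 1] p := by
      intro i _
      rw [hrec]
      simp only [map_add, map_mul]
      ring
    rw [Finset.sum_congr rfl hsplit, Finset.sum_add_distrib]
    have key : ∑ i ∈ Finset.range (s + 1),
          C ((i : ℤ) * (stirling2 s i : ℤ)) * X ^ i * derivative^[i] p =
        ∑ i ∈ Finset.range (s + 1),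
          C (((i : ℤ) + 1) * (stirling2 s (i + 1) : ℤ)) * X ^ (i + 1) * derivative^[i + 1] p := by
      rw [Finset.sum_range_succ'
        (fun i => C ((i : ℤ) * (stirling2 s i : ℤ)) * X ^ i * derivative^[i] p),
        Finset.sum_range_succ]
      rw [stirling2_of_lt s (s + 1) (by omega)]
      push_cast
      simp
    rw [key]
    abel

lemma lahH_of_lt (s : ℕ) : ∀ n k, n < k → lahH s n k = 0 := by
  intro n
  induction n with
  | zero =>
    intro k hk
    cases k with
    | zero => omega
    | succ k => rfl
  | succ n ih =>
    intro k hk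
    cases k with
    | zero => omega
    | succ k =>
      show lahH s n k + (n + k + 1) ^ s * lahH s n (k + 1) = 0
      rw [ih k (by omega), ih (k + 1) (by omega)]
      ring

lemma lahH_zero_right (s n : ℕ) (hn : 1 ≤ n) : lahH s n 0 = 0 := by
  cases n with
  | zero => omega
  | succ n => rfl

lemma theta_iter_sum {ι : Type*} (s : ℕ) (t : Finset ι) (f : ι → Polynomial ℤ) :
    theta^[s] (∑ i ∈ t, f i) = ∑ i ∈ t, theta^[s] (f i) := by
  induction s with
  | zero => simp
  | succ s ih =>
    rw [Function.iterate_succ_apply', ih, theta_sum]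
    exact Finset.sum_congr rfl fun i _ => (Function.iterate_succ_apply' theta s (f i)).symm

lemma Qpoly_eq (s n : ℕ) :
    Qpoly s n = ∑ k ∈ Finset.range (n + 1), C (lahH s n k : ℤ) * X ^ (n + k) := by
  unfold Qpoly lahHPoly
  rw [Finset.mul_sum]
  refine Finset.sum_congr rfl fun k _ => ?_
  rw [pow_add]
  ring

lemma theta_iter_Qpoly (s n : ℕ) : theta^[s] (Qpoly s n) =
    ∑ k ∈ Finset.range (n + 1),
      C (((n + k : ℕ) : ℤ) ^ s * (lahH s n k : ℤ)) * X ^ (n + k) := by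
  rw [Qpoly_eq, theta_iter_sum]
  exact Finset.sum_congr rfl fun k _ => theta_iter_monomial s (n + k) _

lemma Qpoly_succ_eq (s n : ℕ) (hn : 1 ≤ n) :
    Qpoly s (n + 1) = X ^ 2 * Qpoly s n + X * theta^[s] (Qpoly s n) := by
  have hL : ∀ k, (lahH s (n + 1) (k + 1) : ℤ) =
      (lahH s n k : ℤ) + ((n + k + 1 : ℕ) : ℤ) ^ s * (lahH s n (k + 1) : ℤ) := by
    intro k
    show ((lahH s n k + (n + k + 1) ^ s * lahH s n (k + 1) : ℕ) : ℤ) = _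
    push_cast; ring
  have h0 : lahH s (n + 1) 0 = 0 := rfl
  rw [Qpoly_eq s (n + 1), Finset.sum_range_succ']
  rw [h0]
  simp only [Nat.cast_zero, map_zero, zero_mul, add_zero]
  have LHSsum : ∑ k ∈ Finset.range (n + 1), C (lahH s (n + 1) (k + 1) : ℤ) * X ^ (n + 1 + (k + 1)) =
      (∑ k ∈ Finset.range (n + 1), C (lahH s n k : ℤ) * X ^ (n + k + 2))
      + ∑ k ∈ Finset.range (n + 1),
          C (((n + k + 1 : ℕ) : ℤ) ^ s * (lahH s n (k + 1) : ℤ)) * X ^ (n + k + 2) := by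
    rw [← Finset.sum_add_distrib]
    refine Finset.sum_congr rfl fun k _ => ?_
    rw [hL k]
    have e : n + 1 + (k + 1) = n + k + 2 := by omega
    rw [e, map_add]
    ring
  rw [LHSsum]
  have RA : X ^ 2 * Qpoly s n =
      ∑ k ∈ Finset.range (n + 1), C (lahH s n k : ℤ) * X ^ (n + k + 2) := by
    rw [Qpoly_eq, Finset.mul_sum]
    refine Finset.sum_congr rfl fun k _ => ?_
    have e : n + k + 2 = 2 + (n + k) := by omega
    rw [e, pow_add]
    ring
  have RB : X * theta^[s] (Qpoly s n) =
      ∑ k ∈ Finset.range (n + 1),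
        C (((n + k + 1 : ℕ) : ℤ) ^ s * (lahH s n (k + 1) : ℤ)) * X ^ (n + k + 2) := by
    rw [theta_iter_Qpoly, Finset.mul_sum, Finset.sum_range_succ', Finset.sum_range_succ]
    rw [lahH_of_lt s n (n + 1) (by omega), lahH_zero_right s n hn]
    simp only [Nat.cast_zero, mul_zero, map_zero, zero_mul, mul_zero, add_zero]
    refine Finset.sum_congr rfl fun k _ => ?_
    have e : n + (k + 1) = n + k + 1 := by omega
    rw [e]
    have e2 : n + k + 2 = (n + k + 1) + 1 := by omega
    rw [e2, pow_succ]
    ring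
  rw [RA, RB]

theorem Qpoly_rec' (n s : ℕ) (hn : 1 ≤ n) (hs : 1 ≤ s) :
    Qpoly s (n + 1) =
      Polynomial.X ^ 2 * Qpoly s n +
        ∑ i ∈ Finset.Icc 1 s,
          Polynomial.C (stirling2 s i : ℤ) * Polynomial.X ^ (i + 1) *
            (Polynomial.derivative^[i] (Qpoly s n)) := by
  rw [Qpoly_succ_eq s n hn, theta_iter_eq s (Qpoly s n), Finset.mul_sum]
  congr 1
  rw [Finset.sum_range_succ'
    (fun i => X * (C (stirling2 s i : ℤ) * X ^ i * derivative^[i] (Qpoly s n)))]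
  obtain ⟨t, rfl⟩ : ∃ t, s = t + 1 := ⟨s - 1, by omega⟩
  rw [stirling2_succ_zero]
  simp only [Nat.cast_zero, map_zero, zero_mul, mul_zero, add_zero]
  rw [← Finset.Ico_add_one_right_eq_Icc, Finset.sum_Ico_eq_sum_range]
  simp only [Nat.succ_sub_one, Nat.add_sub_cancel]
  refine Finset.sum_congr rfl fun i _ => ?_
  have e : 1 + i = i + 1 := by omega
  rw [e, pow_succ]
  ring
end

section
/- For all integers n ≥ 1 and s ≥ 1, the Lah polynomials with higher level satisfy x^{n+1} · L_{n+1}^s(x) = x^{n+2} · L_n^s(x) + Σ_{i=1}^{s} S(s,i) · x^{i+1} · (d^i/dx^i)(x^n · L_n^s(x)) (equivalently, L_{n+1}^s(x) = x·L_n^s(x) + Σ_{i=1}^{s} S(s,i) · x^{i−n} · (d^i/dx^i)(x^n · L_n^s(x))), where S(s,i) are the Stirling numbers of the second kind and d^i/dx^i denotes the i-th iterated formal derivative of polynomials. -/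
open Finset Polynomial

lemma stirling2_eq_zero_of_lt : ∀ {n k : ℕ}, n < k → stirling2 n k = 0 := by
  intro n
  induction n with
  | zero => intro k hk; obtain ⟨t, rfl⟩ : ∃ t, k = t + 1 := ⟨k - 1, by omega⟩; rfl
  | succ n ih =>
    intro k hk
    obtain ⟨t, rfl⟩ : ∃ t, k = t + 1 := ⟨k - 1, by omega⟩
    show stirling2 n t + (t+1) * stirling2 n (t+1) = 0
    rw [ih (by omega), ih (by omega)]; ring

lemma sum_stirling2_descFactorial (s m : ℕ) :
    ∑ i ∈ range (s + 1), stirling2 s i * m.descFactorial i = m ^ s := by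
  induction s generalizing m with
  | zero => simp [stirling2]
  | succ s ih =>
    have key : ∀ i, m * m.descFactorial i = m.descFactorial (i+1) + i * m.descFactorial i := by
      intro i
      rcases le_or_gt i m with h | h
      · rw [Nat.descFactorial_succ, ← Nat.add_mul, Nat.sub_add_cancel h]
      · rw [Nat.descFactorial_eq_zero_iff_lt.2 h,
          Nat.descFactorial_eq_zero_iff_lt.2 (by omega : m < i + 1)]
        simp
    have h0 : stirling2 s (s+1) = 0 := stirling2_eq_zero_of_lt (by omega)
    have hshift : ∑ i ∈ range (s+1), (i+1) * stirling2 s (i+1) * m.descFactorial (i+1)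
        = ∑ i ∈ range (s+1), i * stirling2 s i * m.descFactorial i := by
      have h2 : ∑ i ∈ range (s+2), i * stirling2 s i * m.descFactorial i
          = ∑ i ∈ range (s+1), (i+1) * stirling2 s (i+1) * m.descFactorial (i+1) := by
        rw [Finset.sum_range_succ']
        simp only [Nat.zero_mul, Nat.add_zero]
      rw [← h2, Finset.sum_range_succ, h0, Nat.mul_zero, Nat.zero_mul, Nat.add_zero]
    calc ∑ i ∈ range (s+2), stirling2 (s+1) i * m.descFactorial i
        = ∑ i ∈ range (s+1), stirling2 (s+1) (i+1) * m.descFactorial (i+1) := by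
          rw [Finset.sum_range_succ']
          rw [show stirling2 (s+1) 0 = 0 from rfl, Nat.zero_mul, Nat.add_zero]
      _ = ∑ i ∈ range (s+1), (stirling2 s i * m.descFactorial (i+1)
            + (i+1) * stirling2 s (i+1) * m.descFactorial (i+1)) := by
          apply Finset.sum_congr rfl; intro i _
          show (stirling2 s i + (i+1) * stirling2 s (i+1)) * _ = _
          ring
      _ = ∑ i ∈ range (s+1), stirling2 s i * m.descFactorial (i+1)
            + ∑ i ∈ range (s+1), (i+1) * stirling2 s (i+1) * m.descFactorial (i+1) :=
          Finset.sum_add_distrib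
      _ = ∑ i ∈ range (s+1), stirling2 s i * (m * m.descFactorial i) := by
          rw [hshift, ← Finset.sum_add_distrib]
          apply Finset.sum_congr rfl; intro i _
          rw [key i]; ring
      _ = m * ∑ i ∈ range (s+1), stirling2 s i * m.descFactorial i := by
          rw [Finset.mul_sum]; apply Finset.sum_congr rfl; intro i _; ring
      _ = m ^ (s+1) := by rw [ih]; ring

lemma lahH_eq_zero_of_lt (s : ℕ) : ∀ {n k : ℕ}, n < k → lahH s n k = 0 := by
  intro n
  induction n with
  | zero => intro k hk; obtain ⟨t, rfl⟩ : ∃ t, k = t + 1 := ⟨k - 1, by omega⟩; rfl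
  | succ n ih =>
    intro k hk
    obtain ⟨t, rfl⟩ : ∃ t, k = t + 1 := ⟨k - 1, by omega⟩
    show lahH s n t + (n + t + 1) ^ s * lahH s n (t + 1) = 0
    rw [ih (by omega), ih (by omega)]; ring

theorem lahHPoly_rec' (n s : ℕ) (hn : 1 ≤ n) (hs : 1 ≤ s) :
    Polynomial.X ^ (n + 1) * lahHPoly s (n + 1) =
      Polynomial.X ^ (n + 2) * lahHPoly s n +
        ∑ i ∈ Finset.Icc 1 s,
          Polynomial.C (stirling2 s i : ℤ) * Polynomial.X ^ (i + 1) *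
            (Polynomial.derivative^[i] (Polynomial.X ^ n * lahHPoly s n)) := by
  obtain ⟨m, rfl⟩ : ∃ m, n = m + 1 := ⟨n - 1, by omega⟩
  set n := m + 1 with hndef
  -- the target sum
  set G : ℕ → Polynomial ℤ :=
    fun j => C (((n + j) ^ s * lahH s n j : ℕ) : ℤ) * X ^ (n + j + 1) with hG
  have hsum : ∀ m' : ℕ, ∑ i ∈ Icc 1 s, stirling2 s i * m'.descFactorial i = m' ^ s := by
    intro m'
    rw [← sum_stirling2_descFactorial s m']
    apply Finset.sum_subset
    · intro i hi; simp only [Finset.mem_Icc] at hi; simp only [Finset.mem_range]; omega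
    · intro i hi hni
      simp only [Finset.mem_range] at hi
      simp only [Finset.mem_Icc] at hni
      have : i = 0 := by omega
      subst this
      obtain ⟨t, rfl⟩ : ∃ t, s = t + 1 := ⟨s - 1, by omega⟩
      rfl
  -- RHS sum equals ∑ G
  have hRHS : ∑ i ∈ Finset.Icc 1 s,
      C ((stirling2 s i : ℤ)) * X ^ (i + 1) *
        (derivative^[i] (X ^ n * lahHPoly s n)) = ∑ j ∈ range (n + 1), G j := by
    have hXL : X ^ n * lahHPoly s n
        = ∑ k ∈ range (n + 1), C ((lahH s n k : ℤ)) * X ^ (n + k) := by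
      rw [lahHPoly, Finset.mul_sum]
      apply Finset.sum_congr rfl; intro k _
      rw [pow_add]; ring
    have hterm : ∀ i k : ℕ,
        C ((stirling2 s i : ℤ)) * X ^ (i + 1) *
          (C ((lahH s n k : ℤ)) * (((n + k).descFactorial i : ℤ) • X ^ (n + k - i)))
        = C (((stirling2 s i * (n + k).descFactorial i : ℕ) : ℤ))
            * (C ((lahH s n k : ℤ)) * X ^ (n + k + 1)) := by
      intro i k
      rcases le_or_gt i (n + k) with h | h
      · rw [smul_eq_C_mul]
        rw [show n + k + 1 = (i + 1) + (n + k - i) by omega, pow_add]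
        rw [Nat.cast_mul, map_mul]
        ring
      · rw [Nat.descFactorial_eq_zero_iff_lt.2 h]
        simp
    calc ∑ i ∈ Finset.Icc 1 s, C ((stirling2 s i : ℤ)) * X ^ (i + 1) *
          (derivative^[i] (X ^ n * lahHPoly s n))
        = ∑ i ∈ Finset.Icc 1 s, ∑ k ∈ range (n + 1),
            C (((stirling2 s i * (n + k).descFactorial i : ℕ) : ℤ))
              * (C ((lahH s n k : ℤ)) * X ^ (n + k + 1)) := by
          apply Finset.sum_congr rfl; intro i _
          rw [hXL, Polynomial.iterate_derivative_sum, Finset.mul_sum]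
          apply Finset.sum_congr rfl; intro k _
          rw [Polynomial.iterate_derivative_C_mul,
            Polynomial.iterate_derivative_X_pow_eq_smul]
          exact hterm i k
      _ = ∑ k ∈ range (n + 1), ∑ i ∈ Finset.Icc 1 s,
            C (((stirling2 s i * (n + k).descFactorial i : ℕ) : ℤ))
              * (C ((lahH s n k : ℤ)) * X ^ (n + k + 1)) := Finset.sum_comm
      _ = ∑ j ∈ range (n + 1), G j := by
          apply Finset.sum_congr rfl; intro k _
          rw [← Finset.sum_mul, ← map_sum, ← Nat.cast_sum, hsum (n + k)]
          simp only [hG, Nat.cast_mul, map_mul]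
          ring
  rw [hRHS]
  have hG0 : G 0 = 0 := by
    simp [hG, show lahH s n 0 = 0 from rfl]
  have hGtop : G (n + 1) = 0 := by
    simp [hG, lahH_eq_zero_of_lt s (show n < n + 1 by omega)]
  have hshift : ∑ k ∈ range (n + 1), G (k + 1) = ∑ j ∈ range (n + 1), G j := by
    have h1 := Finset.sum_range_succ' G (n + 1)
    rw [Finset.sum_range_succ, hGtop, hG0] at h1
    simpa using h1.symm
  calc X ^ (n + 1) * lahHPoly s (n + 1)
      = ∑ k ∈ range (n + 2), C ((lahH s (n + 1) k : ℤ)) * X ^ (n + 1 + k) := by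
        rw [lahHPoly, Finset.mul_sum]
        apply Finset.sum_congr rfl; intro k _
        rw [pow_add]; ring
    _ = ∑ k ∈ range (n + 1), C ((lahH s (n + 1) (k + 1) : ℤ)) * X ^ (n + 1 + (k + 1)) := by
        rw [Finset.sum_range_succ']
        rw [show lahH s (n + 1) 0 = 0 from rfl]
        simp
    _ = ∑ k ∈ range (n + 1), (C ((lahH s n k : ℤ)) * X ^ (n + 2 + k) + G (k + 1)) := by
        apply Finset.sum_congr rfl; intro k _
        rw [show lahH s (n + 1) (k + 1)
            = lahH s n k + (n + k + 1) ^ s * lahH s n (k + 1) from rfl]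
        simp only [hG, Nat.cast_add, Nat.cast_mul, map_add, map_mul]
        rw [show n + 1 + (k + 1) = n + 2 + k by omega,
          show n + (k + 1) + 1 = n + 2 + k by omega,
          show n + (k + 1) = n + k + 1 by omega]
        ring
    _ = X ^ (n + 2) * lahHPoly s n + ∑ j ∈ range (n + 1), G j := by
        rw [Finset.sum_add_distrib, hshift]
        congr 1
        rw [lahHPoly, Finset.mul_sum]
        apply Finset.sum_congr rfl; intro k _
        rw [pow_add]; ring
end

section
/- For all integers s ≥ 1 and n ≥ 1, the Lah number of order s satisfies T_s(n, n−1) = Σ_{j=1}^{n−1} 2·j^s. -/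
open Finset Polynomial

lemma stirling1H_eq_zero (s : ℕ) : ∀ n k, n < k → stirling1H s n k = 0 := by
  intro n
  induction n with
  | zero => intro k hk; match k, hk with | k + 1, _ => rfl
  | succ n ih =>
    intro k hk
    match k, hk with
    | k + 1, hk =>
      show stirling1H s n k + n ^ s * stirling1H s n (k + 1) = 0
      rw [ih k (by omega), ih (k+1) (by omega)]; ring

lemma stirling2H_eq_zero (s : ℕ) : ∀ n k, n < k → stirling2H s n k = 0 := by
  intro n
  induction n with
  | zero => intro k hk; match k, hk with | k + 1, _ => rfl
  | succ n ih =>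
    intro k hk
    match k, hk with
    | k + 1, hk =>
      show stirling2H s n k + (k + 1) ^ s * stirling2H s n (k + 1) = 0
      rw [ih k (by omega), ih (k+1) (by omega)]; ring

lemma stirling1H_diag (s n : ℕ) : stirling1H s n n = 1 := by
  induction n with
  | zero => rfl
  | succ n ih =>
    show stirling1H s n n + n ^ s * stirling1H s n (n + 1) = 1
    rw [ih, stirling1H_eq_zero s n (n+1) (by omega)]; ring

lemma stirling2H_diag (s n : ℕ) : stirling2H s n n = 1 := by
  induction n with
  | zero => rfl
  | succ n ih =>
    show stirling2H s n n + (n + 1) ^ s * stirling2H s n (n + 1) = 1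
    rw [ih, stirling2H_eq_zero s n (n+1) (by omega)]; ring

lemma stirling1H_subdiag (s n : ℕ) :
    stirling1H s (n + 1) n = ∑ j ∈ Finset.Icc 1 n, j ^ s := by
  induction n with
  | zero => rfl
  | succ n ih =>
    show stirling1H s (n + 1) n + (n + 1) ^ s * stirling1H s (n + 1) (n + 1) =
      ∑ j ∈ Finset.Icc 1 (n + 1), j ^ s
    rw [ih, stirling1H_diag,
      Finset.sum_Icc_succ_top (by omega : 1 ≤ n + 1)]
    ring

lemma stirling2H_subdiag (s n : ℕ) :
    stirling2H s (n + 1) n = ∑ j ∈ Finset.Icc 1 n, j ^ s := by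
  induction n with
  | zero => rfl
  | succ n ih =>
    show stirling2H s (n + 1) n + (n + 1) ^ s * stirling2H s (n + 1) (n + 1) =
      ∑ j ∈ Finset.Icc 1 (n + 1), j ^ s
    rw [ih, stirling2H_diag,
      Finset.sum_Icc_succ_top (by omega : 1 ≤ n + 1)]
    ring

theorem lahOrd_sub_one (s n : ℕ) (hs : 1 ≤ s) (hn : 1 ≤ n) :
    lahOrd s n (n - 1) = ∑ j ∈ Finset.Icc 1 (n - 1), 2 * j ^ s := by
  obtain ⟨m, rfl⟩ : ∃ m, n = m + 1 := ⟨n - 1, by omega⟩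
  simp only [Nat.add_sub_cancel]
  rw [lahOrd, Finset.sum_Icc_succ_top (by omega : m ≤ m + 1), Finset.Icc_self,
    Finset.sum_singleton, stirling1H_diag, stirling2H_diag, stirling1H_subdiag,
    stirling2H_subdiag]
  rw [mul_one, one_mul, ← Finset.sum_add_distrib]
  exact Finset.sum_congr rfl fun j _ => by ring
end

section
/- For all integers s ≥ 1 and n ≥ 1, the Lah number of order s satisfies T_s(n, 1) = ∏_{i=1}^{n} ((n−i)^s + 1). -/
open Finset Polynomial

lemma stirling2H_one (s : ℕ) : ∀ n, 1 ≤ n → stirling2H s n 1 = 1 := by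
  intro n hn
  induction n with
  | zero => omega
  | succ m ih =>
    rcases Nat.eq_zero_or_pos m with h | h
    · subst h; simp [stirling2H]
    · show stirling2H s m 0 + (0 + 1) ^ s * stirling2H s m (0 + 1) = 1
      have hz : stirling2H s m 0 = 0 := by
        match m, h with
        | p + 1, _ => rfl
      rw [hz, ih h]
      simp

lemma stirling1H_zero (s : ℕ) : ∀ n, 1 ≤ n → stirling1H s n 0 = 0 := by
  intro n hn
  match n, hn with
  | m + 1, _ => rfl

lemma stirling1H_rowsum (s : ℕ) (hs : 1 ≤ s) :
    ∀ n, 1 ≤ n → ∑ j ∈ Finset.range (n + 1), stirling1H s n j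
      = ∏ i ∈ Finset.range n, (i ^ s + 1) := by
  intro n hn
  induction n with
  | zero => omega
  | succ m ih =>
    rcases Nat.eq_zero_or_pos m with h | h
    · subst h
      simp [stirling1H, Finset.sum_range_succ, zero_pow (by omega : s ≠ 0)]
    · rw [Finset.prod_range_succ, ← ih h]
      rw [Finset.sum_range_succ' (fun j => stirling1H s (m + 1) j)]
      have hz : stirling1H s (m + 1) 0 = 0 := stirling1H_zero s _ (by omega)
      rw [hz, add_zero]
      have hstep : ∀ k, stirling1H s (m + 1) (k + 1)
          = stirling1H s m k + m ^ s * stirling1H s m (k + 1) := fun k => rfl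
      simp only [hstep]
      rw [Finset.sum_add_distrib, ← Finset.mul_sum]
      have h1 : ∑ k ∈ Finset.range (m + 1), stirling1H s m k
          = ∑ j ∈ Finset.range (m + 1), stirling1H s m j := rfl
      have h2 : ∑ k ∈ Finset.range (m + 1), stirling1H s m (k + 1)
          = ∑ j ∈ Finset.range (m + 1), stirling1H s m j := by
        rw [Finset.sum_range_succ' (fun j => stirling1H s m j),
          stirling1H_zero s m h, add_zero]
        rw [Finset.sum_range_succ]
        have : stirling1H s m (m + 1) = 0 := by
          clear ih h1
          induction m with
          | zero => rfl
          | succ p ihp =>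
            show stirling1H s p (p + 1) + p ^ s * stirling1H s p (p + 2) = 0
            have h3 : ∀ q j, q < j → stirling1H s q j = 0 := by
              intro q
              induction q with
              | zero => intro j hj; match j, hj with | j + 1, _ => rfl
              | succ r ihr =>
                intro j hj
                match j, hj with
                | j + 1, hj =>
                  show stirling1H s r j + r ^ s * stirling1H s r (j + 1) = 0
                  rw [ihr j (by omega), ihr (j + 1) (by omega)]
                  simp
            rw [h3 p (p + 1) (by omega), h3 p (p + 2) (by omega)]
            simp
        rw [this, add_zero]
      rw [h1, h2]
      ring

theorem lahOrd_one (s n : ℕ) (hs : 1 ≤ s) (hn : 1 ≤ n) :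
    lahOrd s n 1 = ∏ i ∈ Finset.Icc 1 n, ((n - i) ^ s + 1) := by
  unfold lahOrd
  have hsum : ∑ j ∈ Finset.Icc 1 n, stirling1H s n j * stirling2H s j 1
      = ∑ j ∈ Finset.Icc 1 n, stirling1H s n j := by
    apply Finset.sum_congr rfl
    intro j hj
    rw [stirling2H_one s j (Finset.mem_Icc.mp hj).1, mul_one]
  rw [hsum]
  have h1 : ∑ j ∈ Finset.Icc 1 n, stirling1H s n j
      = ∑ j ∈ Finset.range (n + 1), stirling1H s n j := by
    have hset : Finset.range (n + 1) = insert 0 (Finset.Icc 1 n) := by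
      ext x; simp [Finset.mem_Icc, Finset.mem_range]; omega
    rw [hset, Finset.sum_insert (by simp), stirling1H_zero s n hn, zero_add]
  rw [h1, stirling1H_rowsum s hs n hn]
  have h2 : ∏ i ∈ Finset.Icc 1 n, ((n - i) ^ s + 1)
      = ∏ i ∈ Finset.range n, ((n - (i + 1)) ^ s + 1) := by
    rw [show Finset.Icc 1 n = Finset.Ico 1 (n + 1) by rfl,
      Finset.prod_Ico_eq_prod_range]
    simp only [Nat.add_sub_cancel]
    apply Finset.prod_congr rfl
    intro i _
    rw [Nat.add_comm 1 i]
  rw [h2]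
  rw [← Finset.prod_range_reflect (fun i => (i ^ s + 1)) n]
  apply Finset.prod_congr rfl
  intro i hi
  congr 2
  omega
end

section
/- For all integers s ≥ 1 and n ≥ 0, as an identity of polynomials with integer coefficients, the falling factorial with higher level expands in rising factorials with higher level with the signed Lah numbers of order s as coefficients: ∏_{i=0}^{n−1} (x − i^s) = Σ_{k=0}^{n} (−1)^{n+k} · T_s(n,k) · ∏_{i=0}^{k−1} (x + i^s), where the empty products (n = 0 or k = 0) equal 1. -/
open Finset Polynomial

lemma s1_zero (s : ℕ) : ∀ n j, n < j → stirling1H s n j = 0 := by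
  intro n
  induction n with
  | zero =>
    intro j hj
    cases j with
    | zero => omega
    | succ j => rfl
  | succ n ih =>
    intro j hj
    cases j with
    | zero => omega
    | succ j =>
      simp [stirling1H, ih j (by omega), ih (j+1) (by omega)]

lemma s2_zero (s : ℕ) : ∀ n j, n < j → stirling2H s n j = 0 := by
  intro n
  induction n with
  | zero =>
    intro j hj
    cases j with
    | zero => omega
    | succ j => rfl
  | succ n ih =>
    intro j hj
    cases j with
    | zero => omega
    | succ j =>
      simp [stirling2H, ih j (by omega), ih (j+1) (by omega)]

lemma shift_sum {M : Type*} [AddCommGroup M] (F : ℕ → M) (n : ℕ) (h0 : F 0 = 0) (hn : F (n+1) = 0) :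
    ∑ j ∈ Finset.range (n+1), F (j+1) = ∑ j ∈ Finset.range (n+1), F j := by
  have := Finset.sum_range_succ' F (n+1)
  rw [Finset.sum_range_succ F (n+1)] at this
  -- this : ∑ j ∈ range (n+1), F (j+1) + F 0 = ∑ j ∈ range (n+1), F j + F (n+1)
  rw [h0, hn, add_zero, add_zero] at this
  exact this.symm

lemma falling_eq (s : ℕ) (hs : 1 ≤ s) (n : ℕ) :
    ∏ i ∈ Finset.range n, (Polynomial.X - Polynomial.C ((i : ℤ) ^ s)) =
    ∑ j ∈ Finset.range (n+1),
      (-1 : Polynomial ℤ)^(n+j) * Polynomial.C ((stirling1H s n j : ℤ)) * Polynomial.X ^ j := by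
  induction n with
  | zero => simp [stirling1H]
  | succ n ih =>
    rw [Finset.prod_range_succ, ih]
    conv_rhs => rw [Finset.sum_range_succ']
    have hzero : stirling1H s (n+1) 0 = 0 := rfl
    rw [hzero]
    simp only [Nat.cast_zero, Polynomial.C_0, mul_zero, zero_mul, add_zero]
    have hrec : ∀ j, stirling1H s (n+1) (j+1) = stirling1H s n j + n ^ s * stirling1H s n (j+1) :=
      fun j => rfl
    have key : ∑ j ∈ Finset.range (n+1),
        (-1 : Polynomial ℤ)^(n+j) * Polynomial.C ((n:ℤ)^s * (stirling1H s n (j+1) : ℤ)) *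
          Polynomial.X ^ (j+1)
        = ∑ j ∈ Finset.range (n+1),
        -((-1 : Polynomial ℤ)^(n+j) * Polynomial.C ((n:ℤ)^s * (stirling1H s n j : ℤ)) *
          Polynomial.X ^ j) := by
      have h0 : -((-1 : Polynomial ℤ)^(n+0) * Polynomial.C ((n:ℤ)^s * (stirling1H s n 0 : ℤ)) *
          Polynomial.X ^ 0) = 0 := by
        rcases Nat.eq_zero_or_pos n with h | h
        · subst h; simp [zero_pow (by omega : s ≠ 0)]
        · obtain ⟨m, rfl⟩ := Nat.exists_eq_succ_of_ne_zero h.ne'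
          have : stirling1H s (m+1) 0 = 0 := rfl
          simp [this]
      have hn : -((-1 : Polynomial ℤ)^(n+(n+1)) *
          Polynomial.C ((n:ℤ)^s * (stirling1H s n (n+1) : ℤ)) * Polynomial.X ^ (n+1)) = 0 := by
        simp [s1_zero s n (n+1) (by omega)]
      have := shift_sum
        (fun j => -((-1 : Polynomial ℤ)^(n+j) * Polynomial.C ((n:ℤ)^s * (stirling1H s n j : ℤ)) *
          Polynomial.X ^ j)) n h0 hn
      rw [← this]
      apply Finset.sum_congr rfl
      intro j _
      have hsgn : (-1 : Polynomial ℤ)^(n+(j+1)) = -(-1 : Polynomial ℤ)^(n+j) := by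
        rw [← Nat.add_assoc, pow_succ]; ring
      rw [hsgn]; ring
    calc (∑ j ∈ Finset.range (n+1),
            (-1 : Polynomial ℤ)^(n+j) * Polynomial.C ((stirling1H s n j : ℤ)) * Polynomial.X ^ j) *
          (Polynomial.X - Polynomial.C ((n:ℤ)^s))
        = ∑ j ∈ Finset.range (n+1),
            ((-1 : Polynomial ℤ)^(n+j) * Polynomial.C ((stirling1H s n j : ℤ)) *
              Polynomial.X ^ (j+1)
             - (-1 : Polynomial ℤ)^(n+j) * Polynomial.C ((n:ℤ)^s * (stirling1H s n j : ℤ)) *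
              Polynomial.X ^ j) := by
          rw [Finset.sum_mul]
          apply Finset.sum_congr rfl
          intro j _
          rw [Polynomial.C_mul]
          ring
      _ = ∑ j ∈ Finset.range (n+1),
            ((-1 : Polynomial ℤ)^(n+j) * Polynomial.C ((stirling1H s n j : ℤ)) *
              Polynomial.X ^ (j+1)
             + (-1 : Polynomial ℤ)^(n+j) * Polynomial.C ((n:ℤ)^s * (stirling1H s n (j+1) : ℤ)) *
              Polynomial.X ^ (j+1)) := by
          rw [Finset.sum_add_distrib, Finset.sum_sub_distrib, key, Finset.sum_neg_distrib]
          ring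
      _ = ∑ j ∈ Finset.range (n+1),
            (-1 : Polynomial ℤ)^(n+1+(j+1)) * Polynomial.C ((stirling1H s (n+1) (j+1) : ℤ)) *
              Polynomial.X ^ (j+1) := by
          apply Finset.sum_congr rfl
          intro j _
          rw [hrec j]
          have hsgn : (-1 : Polynomial ℤ)^(n+1+(j+1)) = (-1 : Polynomial ℤ)^(n+j) := by
            have : n+1+(j+1) = (n+j)+2 := by omega
            rw [this, pow_add]; ring
          rw [hsgn]
          push_cast [Polynomial.C_add, Polynomial.C_mul]
          ring

lemma pow_eq_rising (s : ℕ) (hs : 1 ≤ s) (m : ℕ) :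
    (Polynomial.X : Polynomial ℤ) ^ m =
    ∑ k ∈ Finset.range (m+1),
      (-1 : Polynomial ℤ)^(m+k) * Polynomial.C ((stirling2H s m k : ℤ)) *
        ∏ i ∈ Finset.range k, (Polynomial.X + Polynomial.C ((i : ℤ) ^ s)) := by
  induction m with
  | zero => simp [stirling2H]
  | succ m ih =>
    have step : (Polynomial.X : Polynomial ℤ) ^ (m+1) = Polynomial.X ^ m * Polynomial.X := by
      ring
    rw [step, ih]
    conv_rhs => rw [Finset.sum_range_succ']
    have hzero : stirling2H s (m+1) 0 = 0 := rfl
    rw [hzero]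
    simp only [Nat.cast_zero, Polynomial.C_0, mul_zero, zero_mul, add_zero]
    have hrec : ∀ k, stirling2H s (m+1) (k+1) = stirling2H s m k + (k+1) ^ s * stirling2H s m (k+1) :=
      fun k => rfl
    have key : ∑ k ∈ Finset.range (m+1),
        (-1 : Polynomial ℤ)^(m+k) * Polynomial.C (((k:ℤ)+1)^s * (stirling2H s m (k+1) : ℤ)) *
          ∏ i ∈ Finset.range (k+1), (Polynomial.X + Polynomial.C ((i : ℤ) ^ s))
        = ∑ k ∈ Finset.range (m+1),
        -((-1 : Polynomial ℤ)^(m+k) * Polynomial.C ((k:ℤ)^s * (stirling2H s m k : ℤ)) *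
          ∏ i ∈ Finset.range k, (Polynomial.X + Polynomial.C ((i : ℤ) ^ s))) := by
      have h0 : -((-1 : Polynomial ℤ)^(m+0) *
          Polynomial.C (((0:ℕ):ℤ)^s * (stirling2H s m 0 : ℤ)) *
          ∏ i ∈ Finset.range 0, (Polynomial.X + Polynomial.C ((i : ℤ) ^ s))) = 0 := by
        simp [zero_pow (by omega : s ≠ 0)]
      have hm : -((-1 : Polynomial ℤ)^(m+(m+1)) *
          Polynomial.C (((m+1:ℕ):ℤ)^s * (stirling2H s m (m+1) : ℤ)) *
          ∏ i ∈ Finset.range (m+1), (Polynomial.X + Polynomial.C ((i : ℤ) ^ s))) = 0 := by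
        simp [s2_zero s m (m+1) (by omega)]
      have := shift_sum
        (fun k => -((-1 : Polynomial ℤ)^(m+k) *
          Polynomial.C (((k:ℕ):ℤ)^s * (stirling2H s m k : ℤ)) *
          ∏ i ∈ Finset.range k, (Polynomial.X + Polynomial.C ((i : ℤ) ^ s)))) m h0 hm
      rw [← this]
      apply Finset.sum_congr rfl
      intro k _
      have hsgn : (-1 : Polynomial ℤ)^(m+(k+1)) = -(-1 : Polynomial ℤ)^(m+k) := by
        rw [← Nat.add_assoc, pow_succ]; ring
      rw [hsgn]
      push_cast
      ring
    calc (∑ k ∈ Finset.range (m+1),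
            (-1 : Polynomial ℤ)^(m+k) * Polynomial.C ((stirling2H s m k : ℤ)) *
              ∏ i ∈ Finset.range k, (Polynomial.X + Polynomial.C ((i : ℤ) ^ s))) * Polynomial.X
        = ∑ k ∈ Finset.range (m+1),
            ((-1 : Polynomial ℤ)^(m+k) * Polynomial.C ((stirling2H s m k : ℤ)) *
              ∏ i ∈ Finset.range (k+1), (Polynomial.X + Polynomial.C ((i : ℤ) ^ s))
             - (-1 : Polynomial ℤ)^(m+k) * Polynomial.C ((k:ℤ)^s * (stirling2H s m k : ℤ)) *
              ∏ i ∈ Finset.range k, (Polynomial.X + Polynomial.C ((i : ℤ) ^ s))) := by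
          rw [Finset.sum_mul]
          apply Finset.sum_congr rfl
          intro k _
          rw [Finset.prod_range_succ, Polynomial.C_mul]
          ring
      _ = ∑ k ∈ Finset.range (m+1),
            ((-1 : Polynomial ℤ)^(m+k) * Polynomial.C ((stirling2H s m k : ℤ)) *
              ∏ i ∈ Finset.range (k+1), (Polynomial.X + Polynomial.C ((i : ℤ) ^ s))
             + (-1 : Polynomial ℤ)^(m+k) * Polynomial.C (((k:ℤ)+1)^s * (stirling2H s m (k+1) : ℤ)) *
              ∏ i ∈ Finset.range (k+1), (Polynomial.X + Polynomial.C ((i : ℤ) ^ s))) := by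
          rw [Finset.sum_add_distrib, Finset.sum_sub_distrib, key, Finset.sum_neg_distrib]
          ring
      _ = ∑ k ∈ Finset.range (m+1),
            (-1 : Polynomial ℤ)^(m+1+(k+1)) * Polynomial.C ((stirling2H s (m+1) (k+1) : ℤ)) *
              ∏ i ∈ Finset.range (k+1), (Polynomial.X + Polynomial.C ((i : ℤ) ^ s)) := by
          apply Finset.sum_congr rfl
          intro k _
          rw [hrec k]
          have hsgn : (-1 : Polynomial ℤ)^(m+1+(k+1)) = (-1 : Polynomial ℤ)^(m+k) := by
            have : m+1+(k+1) = (m+k)+2 := by omega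
            rw [this, pow_add]; ring
          rw [hsgn]
          push_cast [Polynomial.C_add, Polynomial.C_mul]
          ring

theorem fallingH_eq_sum_signed_lahOrd_risingH (s n : ℕ) (hs : 1 ≤ s) :
    ∏ i ∈ Finset.range n, (Polynomial.X - Polynomial.C ((i : ℤ) ^ s)) =
      ∑ k ∈ Finset.range (n + 1),
        (-1 : Polynomial ℤ) ^ (n + k) * Polynomial.C (lahOrd s n k : ℤ) *
          ∏ i ∈ Finset.range k, (Polynomial.X + Polynomial.C ((i : ℤ) ^ s)) := by
  rw [falling_eq s hs n]
  have step1 : ∀ j ∈ Finset.range (n+1),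
      (-1 : Polynomial ℤ)^(n+j) * Polynomial.C ((stirling1H s n j : ℤ)) * Polynomial.X ^ j
      = ∑ k ∈ Finset.range (n+1),
          (-1 : Polynomial ℤ)^(n+k) *
            Polynomial.C ((stirling1H s n j * stirling2H s j k : ℕ) : ℤ) *
            ∏ i ∈ Finset.range k, (Polynomial.X + Polynomial.C ((i : ℤ) ^ s)) := by
    intro j hj
    have hj' : j + 1 ≤ n + 1 := by
      simp only [Finset.mem_range] at hj; omega
    rw [pow_eq_rising s hs j]
    rw [Finset.mul_sum]
    rw [← Finset.sum_subset (Finset.range_subset_range.mpr hj')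
      (fun k hk hk2 => by
        simp only [Finset.mem_range] at hk hk2
        have : stirling2H s j k = 0 := s2_zero s j k (by omega)
        simp [this])]
    apply Finset.sum_congr rfl
    intro k _
    have hsgn : (-1 : Polynomial ℤ)^(n+j) * (-1 : Polynomial ℤ)^(j+k)
        = (-1 : Polynomial ℤ)^(n+k) := by
      rw [← pow_add]
      have : n+j+(j+k) = (n+k)+2*j := by omega
      rw [this, pow_add, pow_mul]
      simp
    push_cast [Polynomial.C_mul]
    rw [← hsgn]
    ring
  rw [Finset.sum_congr rfl step1, Finset.sum_comm]
  apply Finset.sum_congr rfl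
  intro k hk
  simp only [Finset.mem_range] at hk
  have hsub : Finset.Icc k n ⊆ Finset.range (n+1) := by
    intro j hj
    simp only [Finset.mem_Icc] at hj
    simp only [Finset.mem_range]
    omega
  have restrict : ∑ j ∈ Finset.range (n+1),
      (-1 : Polynomial ℤ)^(n+k) *
        Polynomial.C ((stirling1H s n j * stirling2H s j k : ℕ) : ℤ) *
        ∏ i ∈ Finset.range k, (Polynomial.X + Polynomial.C ((i : ℤ) ^ s))
      = ∑ j ∈ Finset.Icc k n,
      (-1 : Polynomial ℤ)^(n+k) *
        Polynomial.C ((stirling1H s n j * stirling2H s j k : ℕ) : ℤ) *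
        ∏ i ∈ Finset.range k, (Polynomial.X + Polynomial.C ((i : ℤ) ^ s)) := by
    rw [← Finset.sum_subset hsub]
    intro j hjr hji
    simp only [Finset.mem_range] at hjr
    simp only [Finset.mem_Icc] at hji
    have : stirling2H s j k = 0 := s2_zero s j k (by omega)
    simp [this]
  rw [restrict]
  rw [← Finset.sum_mul, ← Finset.mul_sum,
    ← map_sum Polynomial.C (fun j => ((stirling1H s n j * stirling2H s j k : ℕ) : ℤ))
      (Finset.Icc k n)]
  unfold lahOrd
  push_cast
  ring
end

section
/- For all integers n ≥ 1 and s ≥ 1, the Lah polynomials of order s satisfy the recurrence ℒ_{n+1}^s(x) = x·ℒ_n^s(x) + n^s·ℒ_n^s(x) + B_n^s(x), where B_n^s(x) = Σ_{k=0}^{n} k^s · T_s(n,k) · x^k. -/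
open Finset Polynomial

/-- `B_n^s(x) = ∑_{k=0}^{n} k^s T_s(n,k) x^k`. -/
noncomputable def Bpoly (s n : ℕ) : Polynomial ℤ :=
  ∑ k ∈ Finset.range (n + 1),
    Polynomial.C ((k ^ s * lahOrd s n k : ℕ) : ℤ) * Polynomial.X ^ k

/-! Splitting `c_s(n+1, j+1) S_s(j+1, k+1)` with the two defining recurrences gives
`T_s(n+1, k+1) = T_s(n, k) + (n^s + (k+1)^s) T_s(n, k+1)` and `T_s(n+1, 0) = 0`; read coefficientwise,
this is the recurrence for `ℒ_n^s`, the three summands contributing `T_s(n,k)`, `n^s T_s(n,k+1)`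
and `(k+1)^s T_s(n,k+1)` to the coefficient of `x^(k+1)`. -/

theorem stirling1H_eq_zero_of_lt (s : ℕ) : ∀ {n k : ℕ}, n < k → stirling1H s n k = 0
  | 0, _ + 1, _ => rfl
  | n + 1, k + 1, h => by
    simp only [stirling1H, stirling1H_eq_zero_of_lt s (by omega : n < k),
      stirling1H_eq_zero_of_lt s (by omega : n < k + 1), mul_zero, add_zero]

theorem stirling2H_eq_zero_of_lt (s : ℕ) : ∀ {n k : ℕ}, n < k → stirling2H s n k = 0
  | 0, _ + 1, _ => rfl
  | n + 1, k + 1, h => by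
    simp only [stirling2H, stirling2H_eq_zero_of_lt s (by omega : n < k),
      stirling2H_eq_zero_of_lt s (by omega : n < k + 1), mul_zero, add_zero]

theorem lahOrd_eq_zero_of_lt {s n k : ℕ} (h : n < k) : lahOrd s n k = 0 := by
  rw [lahOrd, Icc_eq_empty (by omega), sum_empty]

theorem lahOrd_eq_sum_range {s n k N : ℕ} (hN : n < N) :
    lahOrd s n k = ∑ j ∈ range N, stirling1H s n j * stirling2H s j k := by
  refine sum_subset (fun j hj => by simp only [mem_Icc, mem_range] at hj ⊢; omega) ?_
  intro j _ hj
  rcases lt_or_ge j k with hjk | hkj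
  · rw [stirling2H_eq_zero_of_lt s hjk, mul_zero]
  · rw [stirling1H_eq_zero_of_lt s (by simp only [mem_Icc] at hj; omega), zero_mul]

theorem lahOrd_succ_zero (s n : ℕ) : lahOrd s (n + 1) 0 = 0 := by
  rw [lahOrd_eq_sum_range (N := n + 2) (by omega), sum_range_succ']
  simp [stirling1H, stirling2H]

theorem lahOrd_succ_succ (s n k : ℕ) :
    lahOrd s (n + 1) (k + 1) = lahOrd s n k + (n ^ s + (k + 1) ^ s) * lahOrd s n (k + 1) := by
  have shifted : lahOrd s n (k + 1) =
      ∑ j ∈ range (n + 1), stirling1H s n (j + 1) * stirling2H s (j + 1) (k + 1) := by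
    rw [lahOrd_eq_sum_range (N := n + 2) (by omega), sum_range_succ']
    simp [stirling2H]
  calc lahOrd s (n + 1) (k + 1)
      = ∑ j ∈ range (n + 1), (stirling1H s n j + n ^ s * stirling1H s n (j + 1)) *
          (stirling2H s j k + (k + 1) ^ s * stirling2H s j (k + 1)) := by
        rw [lahOrd_eq_sum_range (N := n + 2) (by omega), sum_range_succ']
        simp [stirling1H, stirling2H]
    _ = ∑ j ∈ range (n + 1), stirling1H s n j * stirling2H s j k +
          (k + 1) ^ s * ∑ j ∈ range (n + 1), stirling1H s n j * stirling2H s j (k + 1) +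
          n ^ s * ∑ j ∈ range (n + 1), stirling1H s n (j + 1) * stirling2H s (j + 1) (k + 1) := by
        simp only [mul_sum, ← sum_add_distrib]
        exact sum_congr rfl fun j _ => by simp only [stirling2H]; ring
    _ = lahOrd s n k + (n ^ s + (k + 1) ^ s) * lahOrd s n (k + 1) := by
        rw [← shifted, ← lahOrd_eq_sum_range (by omega), ← lahOrd_eq_sum_range (by omega)]
        ring

theorem coeff_sum_range_C_mul_X_pow {R : Type*} [Semiring R] {n : ℕ} {c : ℕ → R}
    (hc : ∀ k, n < k → c k = 0) (m : ℕ) :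
    (∑ k ∈ range (n + 1), C (c k) * X ^ k).coeff m = c m := by
  simp only [finsetSum_coeff, coeff_C_mul_X_pow, sum_ite_eq, mem_range]
  split_ifs with hm
  · rfl
  · exact (hc m (by omega)).symm

theorem coeff_lahOrdPoly (s n m : ℕ) : (lahOrdPoly s n).coeff m = lahOrd s n m :=
  coeff_sum_range_C_mul_X_pow (fun _ hk => by rw [lahOrd_eq_zero_of_lt hk, Nat.cast_zero]) m

theorem coeff_Bpoly (s n m : ℕ) : (Bpoly s n).coeff m = m ^ s * lahOrd s n m := by
  rw [Bpoly, coeff_sum_range_C_mul_X_pow, Nat.cast_mul, Nat.cast_pow]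
  intro k hk
  rw [lahOrd_eq_zero_of_lt hk, mul_zero, Nat.cast_zero]

theorem lahOrdPoly_rec_general (n s : ℕ) (hn : 1 ≤ n) :
    lahOrdPoly s (n + 1) =
      Polynomial.X * lahOrdPoly s n + Polynomial.C ((n : ℤ) ^ s) * lahOrdPoly s n +
        Bpoly s n := by
  ext m
  rw [coeff_add, coeff_add, coeff_C_mul, coeff_lahOrdPoly, coeff_lahOrdPoly, coeff_Bpoly]
  cases m with
  | zero =>
    obtain ⟨n, rfl⟩ := Nat.exists_eq_add_of_le' hn
    simp [lahOrd_succ_zero]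
  | succ k =>
    rw [coeff_X_mul, coeff_lahOrdPoly, lahOrd_succ_succ]
    push_cast
    ring

theorem lahOrdPoly_rec (n s : ℕ) (hn : 1 ≤ n) (hs : 1 ≤ s) :
    lahOrdPoly s (n + 1) =
      Polynomial.X * lahOrdPoly s n + Polynomial.C ((n : ℤ) ^ s) * lahOrdPoly s n +
        Bpoly s n :=
  lahOrdPoly_rec_general n s hn
end
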